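/- If σ_min(A) > 1 and x* is a solution of the absolute value equation Ax - |x| - b = 0, then for all x ∈ ℝⁿ it holds that (x - x*)ᵀ Aᵀ r(x) ≥ (1/2) ‖r(x)‖², where r(x) = Ax - |x| - b. -/
import Mathlib

open Matrix
open scoped BigOperators

/-- Euclidean norm of a vector in ℝⁿ. -/
noncomputable def evnorm {n : ℕ} (x : Fin n → ℝ) : ℝ := Real.sqrt (∑ i, x i ^ 2)

/-- Componentwise absolute value. -/
def vabs {n : ℕ} (x : Fin n → ℝ) : Fin n → ℝ := fun i => |x i|

/-- Spectral norm: sup of ‖Ax‖ over unit vectors x. -/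
noncomputable def specNorm {n : ℕ} (A : Matrix (Fin n) (Fin n) ℝ) : ℝ :=
  sSup {c : ℝ | ∃ x : Fin n → ℝ, evnorm x = 1 ∧ c = evnorm (A *ᵥ x)}

/-- Smallest singular value: inf of ‖Ax‖ over unit vectors x. -/
noncomputable def sigmaMin {n : ℕ} (A : Matrix (Fin n) (Fin n) ℝ) : ℝ :=
  sInf {c : ℝ | ∃ x : Fin n → ℝ, evnorm x = 1 ∧ c = evnorm (A *ᵥ x)}

lemma evnorm_nonneg {n : ℕ} (x : Fin n → ℝ) : 0 ≤ evnorm x := Real.sqrt_nonneg _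

lemma evnorm_sq {n : ℕ} (x : Fin n → ℝ) : evnorm x ^ 2 = ∑ i, x i ^ 2 :=
  Real.sq_sqrt (Finset.sum_nonneg fun i _ => sq_nonneg _)

lemma evnorm_smul {n : ℕ} (a : ℝ) (x : Fin n → ℝ) : evnorm (a • x) = |a| * evnorm x := by
  unfold evnorm
  rw [← Real.sqrt_sq_eq_abs, ← Real.sqrt_mul (sq_nonneg a), Finset.mul_sum]
  congr 1
  exact Finset.sum_congr rfl fun i _ => by simp [mul_pow]

lemma evnorm_pos {n : ℕ} {x : Fin n → ℝ} (hx : x ≠ 0) : 0 < evnorm x := by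
  rcases (evnorm_nonneg x).lt_or_eq with h | h
  · exact h
  · exfalso
    apply hx
    have hle : ∑ i, x i ^ 2 ≤ 0 := Real.sqrt_eq_zero'.mp h.symm
    have h0 : ∑ i, x i ^ 2 = 0 :=
      le_antisymm hle (Finset.sum_nonneg fun i _ => sq_nonneg _)
    funext i
    have := (Finset.sum_eq_zero_iff_of_nonneg (fun i _ => sq_nonneg (x i))).mp h0 i
      (Finset.mem_univ i)
    simpa [pow_eq_zero_iff] using this

-- key lemma
lemma key {n : ℕ} (A : Matrix (Fin n) (Fin n) ℝ) (hA : 1 < sigmaMin A)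
    (d : Fin n → ℝ) : ∑ i, d i ^ 2 ≤ ∑ i, (A *ᵥ d) i ^ 2 := by
  by_cases hd : d = 0
  · subst hd; simp
  · have hc : 0 < evnorm d := evnorm_pos hd
    set c := evnorm d with hcdef
    have hu : evnorm ((c⁻¹) • d) = 1 := by
      rw [evnorm_smul, abs_of_pos (inv_pos.mpr hc), inv_mul_cancel₀ hc.ne']
    have hmem : evnorm (A *ᵥ ((c⁻¹) • d)) ∈
        {r : ℝ | ∃ x : Fin n → ℝ, evnorm x = 1 ∧ r = evnorm (A *ᵥ x)} :=
      ⟨_, hu, rfl⟩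
    have hbdd : BddBelow {r : ℝ | ∃ x : Fin n → ℝ, evnorm x = 1 ∧ r = evnorm (A *ᵥ x)} :=
      ⟨0, fun r ⟨x, _, hr⟩ => hr ▸ evnorm_nonneg _⟩
    have h1 : (1:ℝ) < evnorm (A *ᵥ ((c⁻¹) • d)) := lt_of_lt_of_le hA (csInf_le hbdd hmem)
    rw [Matrix.mulVec_smul, evnorm_smul, abs_of_pos (inv_pos.mpr hc)] at h1
    have h2 : c < evnorm (A *ᵥ d) := by
      have := mul_lt_mul_of_pos_left h1 hc
      rwa [mul_one, ← mul_assoc, mul_inv_cancel₀ hc.ne', one_mul] at this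
    calc ∑ i, d i ^ 2 = c ^ 2 := (evnorm_sq d).symm
      _ ≤ evnorm (A *ᵥ d) ^ 2 := by nlinarith
      _ = _ := evnorm_sq _

theorem stmt1 {n : ℕ} (A : Matrix (Fin n) (Fin n) ℝ) (b : Fin n → ℝ)
    (hA : 1 < sigmaMin A) (xs : Fin n → ℝ)
    (hxs : A *ᵥ xs - vabs xs - b = 0) :
    ∀ x : Fin n → ℝ,
      (x - xs) ⬝ᵥ (Aᵀ *ᵥ (A *ᵥ x - vabs x - b)) ≥
        (1 / 2) * evnorm (A *ᵥ x - vabs x - b) ^ 2 := by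
  intro x
  have hr : A *ᵥ x - vabs x - b =
      fun i => (A *ᵥ (x - xs)) i - (|x i| - |xs i|) := by
    funext i
    have h0 := congrFun hxs i
    simp [Matrix.mulVec_sub, vabs] at h0 ⊢
    linarith
  rw [hr]
  set g := A *ᵥ (x - xs) with hg
  set s : Fin n → ℝ := fun i => |x i| - |xs i| with hs
  have hlhs : (x - xs) ⬝ᵥ (Aᵀ *ᵥ fun i => g i - s i) = ∑ i, g i * (g i - s i) := by
    rw [Matrix.dotProduct_mulVec, Matrix.vecMul_transpose]
    simp [dotProduct, hg]
  rw [hlhs]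
  have hesq : evnorm (fun i => g i - s i) ^ 2 = ∑ i, (g i - s i) ^ 2 := evnorm_sq _
  rw [hesq]
  have hgk : ∑ i, (x - xs) i ^ 2 ≤ ∑ i, g i ^ 2 := key A hA _
  have hsd : ∑ i, s i ^ 2 ≤ ∑ i, (x - xs) i ^ 2 := by
    apply Finset.sum_le_sum; intro i _
    have h1 : |(|x i| - |xs i|)| ≤ |x i - xs i| := abs_abs_sub_abs_le_abs_sub _ _
    simp only [hs, Pi.sub_apply]
    calc (|x i| - |xs i|) ^ 2 = |(|x i| - |xs i|)| ^ 2 := (sq_abs _).symm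
      _ ≤ |x i - xs i| ^ 2 := pow_le_pow_left₀ (abs_nonneg _) h1 2
      _ = (x i - xs i) ^ 2 := sq_abs _
  have e1 : ∑ i, g i * (g i - s i) = (∑ i, g i ^ 2) - ∑ i, g i * s i := by
    rw [← Finset.sum_sub_distrib]; exact Finset.sum_congr rfl fun i _ => by ring
  have e2 : ∑ i, (g i - s i) ^ 2 = ((∑ i, g i ^ 2) - 2 * ∑ i, g i * s i) + ∑ i, s i ^ 2 := by
    rw [Finset.mul_sum, ← Finset.sum_sub_distrib, ← Finset.sum_add_distrib]
    exact Finset.sum_congr rfl fun i _ => by ring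
  rw [e1, e2]
  linarith
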